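/- Let α satisfy: α(s_i,s_j)=1 implies s_i ∩ s_j ≠ ∅, and for subsets s_i' ⊆ s_i, s_j' ⊆ s_j with α(s_i',s_j')=0 the set (s_i ∩ s_j) \ (s_i' ∩ s_j') is nonempty. Define α-PCH as α but returning conflict additionally whenever (s_i ∩ s_j) ∩ val(C) ≠ ∅. Then α-PCH also satisfies: α-PCH(s_i,s_j)=1 implies s_i ∩ s_j ≠ ∅, and for subsets with α-PCH(s_i',s_j')=0 the set (s_i ∩ s_j) \ (s_i' ∩ s_j') is nonempty. -/

import Mathlib

/-- The α-PCH conflict function: it reports a conflict whenever the overlap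
hits the union of the cluster heads, and otherwise behaves like α. -/
def alphaPCH {U : Type*} [DecidableEq U] (α : Finset U → Finset U → Bool)
    (C : Finset (Finset U)) (s s' : Finset U) : Bool :=
  if ((s ∩ s') ∩ C.biUnion id).Nonempty then true else α s s'

theorem Finset.sdiff_nonempty_of_inter_nonempty_of_not_inter_nonempty {U : Type*}
    [DecidableEq U] {A B V : Finset U} (hA : (A ∩ V).Nonempty) (hB : ¬(B ∩ V).Nonempty) :
    (A \ B).Nonempty := by
  obtain ⟨x, hx⟩ := hA
  obtain ⟨hxA, hxV⟩ := Finset.mem_inter.1 hx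
  exact ⟨x, Finset.mem_sdiff.2 ⟨hxA, fun hxB => hB ⟨x, Finset.mem_inter.2 ⟨hxB, hxV⟩⟩⟩⟩

section alphaPCH

variable {U : Type*} [DecidableEq U] {α : Finset U → Finset U → Bool}
  {C : Finset (Finset U)} {s s' : Finset U}

theorem alphaPCH_eq_true_iff :
    alphaPCH α C s s' = true ↔ ((s ∩ s') ∩ C.biUnion id).Nonempty ∨ α s s' = true := by
  unfold alphaPCH
  by_cases hC : ((s ∩ s') ∩ C.biUnion id).Nonempty
  · rw [if_pos hC]
    exact iff_of_true rfl (Or.inl hC)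
  · rw [if_neg hC]
    exact (or_iff_right hC).symm

theorem alphaPCH_eq_false_iff :
    alphaPCH α C s s' = false ↔ ¬((s ∩ s') ∩ C.biUnion id).Nonempty ∧ α s s' = false := by
  unfold alphaPCH
  by_cases hC : ((s ∩ s') ∩ C.biUnion id).Nonempty
  · rw [if_pos hC]
    exact iff_of_false Bool.true_eq_false.mp (fun h => h.1 hC)
  · rw [if_neg hC]
    exact (and_iff_right hC).symm

end alphaPCH

/-- If α satisfies condition (ii) of a well-conditioned function, then so
does α-PCH. -/
theorem stmt_16 {U : Type*} [DecidableEq U] (α : Finset U → Finset U → Bool)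
    (hα : ∀ s s' : Finset U, α s s' = true →
      (s ∩ s').Nonempty ∧
        ∀ t ⊆ s, ∀ t' ⊆ s', α t t' = false →
          ((s ∩ s') \ (t ∩ t')).Nonempty)
    (C : Finset (Finset U)) (si sj : Finset U)
    (h : alphaPCH α C si sj = true) :
    (si ∩ sj).Nonempty ∧
      ∀ si' ⊆ si, ∀ sj' ⊆ sj, alphaPCH α C si' sj' = false →
        ((si ∩ sj) \ (si' ∩ sj')).Nonempty := by
  rcases alphaPCH_eq_true_iff.1 h with hC | hαij
  · refine ⟨hC.mono Finset.inter_subset_left, fun si' _ sj' _ hf => ?_⟩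
    exact Finset.sdiff_nonempty_of_inter_nonempty_of_not_inter_nonempty hC
      (alphaPCH_eq_false_iff.1 hf).1
  · obtain ⟨hne, hsdiff⟩ := hα si sj hαij
    exact ⟨hne, fun si' hsi' sj' hsj' hf => hsdiff si' hsi' sj' hsj' (alphaPCH_eq_false_iff.1 hf).2⟩
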